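/- arXiv:math/0301350 — 2 statements merged into one kernel-verified Lean document; each statement's English description precedes it below -/
import Mathlib

section
/- Let A = (1/2)(Ric − (t₀/6)R·g) on a 4-manifold, viewed pointwise as a symmetric endomorphism via g. If the eigenvalues of A lie in Γ₂⁺, then pointwise (t₀−1)·R·g < 2·Ric < (2−t₀)·R·g as quadratic forms. -/
/-!
Write `λᵢ` for the eigenvalues of `A` and `σ = ∑ λᵢ = tr A = (1/2 - t₀/3) tr S`. Since
`σ₂(A) > 0` means `∑ λᵢ² < σ²`, every `λₖ² < σ²`, so `λₖ < σ`; Cauchy–Schwarz on the other three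
eigenvalues improves this to `4 λₖ + 2 σ > 0`. The two matrices of the conclusion are
`2 σ + 4 A` and `4 σ - 4 A`, hence positive definite.
-/

open Matrix

/-- σ₂(A) = (1/2)((tr A)² − tr(A²)) for a 4×4 matrix. -/
noncomputable def sigma2M (A : Matrix (Fin 4) (Fin 4) ℝ) : ℝ :=
  ((Matrix.trace A) ^ 2 - Matrix.trace (A * A)) / 2

section Gamma2Cone

open Finset

variable {ι : Type*} [Fintype ι] {μ : ι → ℝ}

theorem lt_sum_of_sum_sq_lt_sq_sum (hpos : 0 < ∑ i, μ i) (hsq : ∑ i, μ i ^ 2 < (∑ i, μ i) ^ 2)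
    (k : ι) : μ k < ∑ i, μ i := by
  have hk : μ k ^ 2 ≤ ∑ i, μ i ^ 2 :=
    single_le_sum (fun i _ ↦ sq_nonneg (μ i)) (mem_univ k)
  exact lt_of_pow_lt_pow_left₀ 2 hpos.le (hk.trans_lt hsq)

theorem card_mul_add_card_sub_two_mul_sum_pos [DecidableEq ι] (hpos : 0 < ∑ i, μ i)
    (hsq : ∑ i, μ i ^ 2 < (∑ i, μ i) ^ 2) (k : ι) :
    0 < Fintype.card ι * μ k + (Fintype.card ι - 2) * ∑ i, μ i := by
  set n : ℝ := (Fintype.card ι : ℝ)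
  have hsum := add_sum_erase univ μ (mem_univ k)
  have hsum_sq := add_sum_erase univ (μ · ^ 2) (mem_univ k)
  have hcard : ((univ.erase k).card : ℝ) = n - 1 := by
    rw [card_erase_of_mem (mem_univ k), card_univ, Nat.cast_sub (Fintype.card_pos_iff.mpr ⟨k⟩),
      Nat.cast_one]
  have hcs := sq_sum_le_card_mul_sum_sq (s := univ.erase k) (f := μ)
  rw [hcard] at hcs
  have hrest : 0 < ∑ i ∈ univ.erase k, μ i := by
    linarith [lt_sum_of_sum_sq_lt_sq_sum hpos hsq k]
  set t := ∑ i ∈ univ.erase k, μ i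
  set q := ∑ i ∈ univ.erase k, μ i ^ 2
  have hq : q < 2 * μ k * t + t ^ 2 := by rw [← hsum, ← hsum_sq] at hsq; linarith
  have hn : 0 < n - 1 := by
    have : 0 ≤ q := sum_nonneg fun i _ ↦ sq_nonneg (μ i)
    nlinarith
  have hprod : 0 < t * (n * μ k + (n - 2) * ∑ i, μ i) := by
    rw [← hsum]
    nlinarith [mul_lt_mul_of_pos_left hq hn]
  exact pos_of_mul_pos_right hprod hrest.le

end Gamma2Cone

namespace Matrix.IsHermitian

open scoped ComplexOrder

variable {𝕜 n : Type*} [RCLike 𝕜] [Fintype n] [DecidableEq n] {A : Matrix n n 𝕜}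

theorem posDef_smul_one_add_smul_iff (hA : A.IsHermitian) (c d : ℝ) :
    (c • (1 : Matrix n n 𝕜) + d • A).PosDef ↔ ∀ i, 0 < c + d * hA.eigenvalues i := by
  have hconj : c • (1 : Matrix n n 𝕜) + d • A = Unitary.conjStarAlgAut ℝ _ hA.eigenvectorUnitary
      (diagonal fun i ↦ ((c + d * hA.eigenvalues i : ℝ) : 𝕜)) := by
    conv_lhs => rw [hA.spectral_theorem]
    rw [Unitary.conjStarAlgAut_apply, ← Unitary.conjStarAlgAut_apply (S := ℝ),
      ← map_one (Unitary.conjStarAlgAut ℝ _ hA.eigenvectorUnitary), ← map_smul, ← map_smul,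
      ← map_add]
    congr 1
    ext i j
    by_cases h : i = j <;> simp [h, RCLike.real_smul_eq_coe_mul]
  rw [hconj, Unitary.conjStarAlgAut_apply, Matrix.IsUnit.posDef_star_right_conjugate_iff
    Unitary.isUnit_coe, posDef_diagonal_iff]
  simp only [RCLike.ofReal_pos]

theorem trace_mul_self_eq_sum_sq_eigenvalues (hA : A.IsHermitian) :
    (A * A).trace = ∑ i, (hA.eigenvalues i : 𝕜) ^ 2 := by
  conv_lhs => rw [hA.spectral_theorem, ← map_mul, Unitary.conjStarAlgAut_apply, trace_mul_cycle,
    Unitary.coe_star_mul_self, one_mul, diagonal_mul_diagonal, trace_diagonal]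
  simp [sq]

end Matrix.IsHermitian

/-- Pointwise form of the Ricci inequalities: if S is a symmetric endomorphism of a
4-dimensional inner product space with trace r (playing the role of g⁻¹Ric, r = R), and
A = (1/2)(S − (t₀/6)·r·I) has eigenvalues in Γ₂⁺, then
(t₀−1)·r·I < 2S < (2−t₀)·r·I as quadratic forms. -/
theorem ricci_inequalities (t₀ : ℝ) (S : Matrix (Fin 4) (Fin 4) ℝ) (hS : S.IsSymm)
    (h2 : 0 < sigma2M ((1 / 2 : ℝ) •
      (S - (t₀ / 6 * Matrix.trace S) • (1 : Matrix (Fin 4) (Fin 4) ℝ))))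
    (h1 : 0 < Matrix.trace ((1 / 2 : ℝ) •
      (S - (t₀ / 6 * Matrix.trace S) • (1 : Matrix (Fin 4) (Fin 4) ℝ)))) :
    ((2 : ℝ) • S - ((t₀ - 1) * Matrix.trace S) • (1 : Matrix (Fin 4) (Fin 4) ℝ)).PosDef ∧
    (((2 - t₀) * Matrix.trace S) • (1 : Matrix (Fin 4) (Fin 4) ℝ) - (2 : ℝ) • S).PosDef := by
  set A := (1 / 2 : ℝ) • (S - (t₀ / 6 * S.trace) • (1 : Matrix (Fin 4) (Fin 4) ℝ))
  have hA : A.IsHermitian := by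
    simp only [isHermitian_iff_isSymm, A, IsSymm, transpose_smul, transpose_sub, transpose_one,
      hS.eq]
  set σ := ∑ i, hA.eigenvalues i
  have htrace : A.trace = σ := by simp [hA.trace_eq_sum_eigenvalues, σ]
  have hσ : σ = (1 / 2 - t₀ / 3) * S.trace := by
    rw [← htrace]
    simp only [A, trace_smul, trace_sub, trace_one, Fintype.card_fin, Nat.cast_ofNat, smul_eq_mul]
    ring
  have hpos : 0 < σ := htrace ▸ h1
  have hsq : ∑ i, hA.eigenvalues i ^ 2 < σ ^ 2 := by
    rw [sigma2M, htrace, hA.trace_mul_self_eq_sum_sq_eigenvalues] at h2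
    simpa using h2
  have hlower (i : Fin 4) : 0 < 2 * σ + 4 * hA.eigenvalues i := by
    have := card_mul_add_card_sub_two_mul_sum_pos hpos hsq i
    rw [Fintype.card_fin, Nat.cast_ofNat] at this
    linarith
  have hupper (i : Fin 4) : 0 < 4 * σ + -4 * hA.eigenvalues i := by
    linarith [lt_sum_of_sum_sq_lt_sq_sum hpos hsq i]
  have hS_lower : (2 : ℝ) • S - ((t₀ - 1) * S.trace) • (1 : Matrix (Fin 4) (Fin 4) ℝ) =
      (2 * σ) • 1 + (4 : ℝ) • A := by
    rw [hσ]; simp only [A]; module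
  have hS_upper : ((2 - t₀) * S.trace) • (1 : Matrix (Fin 4) (Fin 4) ℝ) - (2 : ℝ) • S =
      (4 * σ) • 1 + (-4 : ℝ) • A := by
    rw [hσ]; simp only [A]; module
  rw [hS_lower, hS_upper, hA.posDef_smul_one_add_smul_iff, hA.posDef_smul_one_add_smul_iff]
  exact ⟨hlower, hupper⟩
end

section
/- (Key pointwise step in the C¹ estimate, t < 1 case) Let t < 1 and let H be a 4×4 real symmetric matrix (Hessian of u at a point), v ∈ ℝ⁴ (gradient), and suppose the matrix B = H + ((1−t)/2)tr(H)·I − ((2−t)/2)|v|²·I + v⊗v + E lies in Γ₂⁺, where E is symmetric with σ₁(E) ≤ ε|v|². Then for ε and β' > 0 sufficiently small (depending only on t), there exists an index i₀ with H_{i₀i₀} ≥ β'|v|². -/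
open Matrix

/-- Key pointwise step in the C¹ estimate for t < 1: if
B = H + ((1−t)/2)tr(H)·I − ((2−t)/2)|v|²·I + v⊗v + E lies in Γ₂⁺ with σ₁(E) ≤ ε|v|²,
then for ε, β' > 0 sufficiently small (depending only on t) some diagonal entry of the
Hessian satisfies H_{i₀i₀} ≥ β'|v|². -/
theorem diag_entry_lower_bound (t : ℝ) (ht : t < 1) :
    ∃ ε > (0 : ℝ), ∃ β' > (0 : ℝ),
      ∀ (H E : Matrix (Fin 4) (Fin 4) ℝ) (v : Fin 4 → ℝ),
        H.IsSymm → E.IsSymm →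
        Matrix.trace E ≤ ε * ∑ i, (v i) ^ 2 →
        (0 < sigma2M (H + ((1 - t) / 2 * Matrix.trace H) • (1 : Matrix (Fin 4) (Fin 4) ℝ)
              - ((2 - t) / 2 * ∑ i, (v i) ^ 2) • (1 : Matrix (Fin 4) (Fin 4) ℝ)
              + Matrix.vecMulVec v v + E) ∧
         0 < Matrix.trace (H + ((1 - t) / 2 * Matrix.trace H) • (1 : Matrix (Fin 4) (Fin 4) ℝ)
              - ((2 - t) / 2 * ∑ i, (v i) ^ 2) • (1 : Matrix (Fin 4) (Fin 4) ℝ)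
              + Matrix.vecMulVec v v + E)) →
        ∃ i₀ : Fin 4, β' * ∑ i, (v i) ^ 2 ≤ H i₀ i₀ := by
  have h3 : (0:ℝ) < 3 - 2 * t := by linarith
  refine ⟨1/2, by norm_num, 1 / (8 * (3 - 2 * t)), by positivity, ?_⟩
  intro H E v _ _ hE hB
  obtain ⟨-, htr⟩ := hB
  by_contra hcon
  push_neg at hcon
  set S : ℝ := ∑ i, (v i) ^ 2 with hSdef
  have hS : 0 ≤ S := Finset.sum_nonneg fun i _ => sq_nonneg _
  -- trace of B
  have htrB : Matrix.trace (H + ((1 - t) / 2 * Matrix.trace H) • (1 : Matrix (Fin 4) (Fin 4) ℝ)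
      - ((2 - t) / 2 * S) • (1 : Matrix (Fin 4) (Fin 4) ℝ)
      + Matrix.vecMulVec v v + E)
      = (3 - 2 * t) * Matrix.trace H + (2 * t - 3) * S + Matrix.trace E := by
    have h1 : Matrix.trace (1 : Matrix (Fin 4) (Fin 4) ℝ) = 4 := by
      simp [Matrix.trace_one]
    have h2 : Matrix.trace (Matrix.vecMulVec v v) = S := by
      simp [Matrix.trace, Matrix.vecMulVec, Matrix.diag, hSdef, sq]
    simp only [Matrix.trace_add, Matrix.trace_sub, Matrix.trace_smul, smul_eq_mul, h1, h2]
    ring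
  have htrH : Matrix.trace H < 4 * (1 / (8 * (3 - 2 * t))) * S := by
    have : Matrix.trace H = ∑ i, H i i := by simp [Matrix.trace, Matrix.diag]
    rw [this]
    calc ∑ i, H i i < ∑ _i : Fin 4, (1 / (8 * (3 - 2 * t))) * S :=
          Finset.sum_lt_sum_of_nonempty (by simp) fun i _ => hcon i
      _ = 4 * (1 / (8 * (3 - 2 * t))) * S := by
          simp [Finset.sum_const]; ring
  rw [htrB] at htr
  have hE' : Matrix.trace E ≤ 1/2 * S := hE
  have key : (3 - 2 * t) * Matrix.trace H < (3 - 2*t) * (4 * (1 / (8 * (3 - 2 * t))) * S) :=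
    mul_lt_mul_of_pos_left htrH h3
  have : (3 - 2*t) * (4 * (1 / (8 * (3 - 2 * t))) * S) = 1/2 * S := by
    field_simp; ring
  rw [this] at key
  nlinarith [hS, ht]
end
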